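/- arXiv:2511.09049 — 2 statements merged into one kernel-verified Lean document; each statement's English description precedes it below -/
import Mathlib

section
/- Let p : Fin n → ℝ be a function with strictly increasing values p 0 < p 1 < ... < p (n-1), and define edge weights on the complete graph on Fin n by w(u,s) = |p u - p s|. Then the path graph connecting consecutive nodes u and u+1 has total edge weight p (n-1) - p 0, and this is the minimum possible total weight over all spanning trees of the complete graph. -/
/-- For strictly increasing `p : Fin (n+1) → ℝ` and edge weights
`w(u,s) = |p u - p s|` on the complete graph, the path graph on consecutive
vertices has total weight `p (last) - p 0`, and this is minimal over all
spanning trees (equivalently, all trees on `Fin (n+1)`). -/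
noncomputable def graphWeight {n : ℕ} (p : Fin n → ℝ) (G : SimpleGraph (Fin n)) : ℝ :=
  ∑ e ∈ (Set.toFinite G.edgeSet).toFinset,
    Sym2.lift ⟨fun u s => |p u - p s|, fun u s => abs_sub_comm _ _⟩ e

noncomputable def qext {n : ℕ} (p : Fin (n + 1) → ℝ) : ℕ → ℝ :=
  fun i => p ⟨min i n, by omega⟩

lemma qext_fin {n : ℕ} (p : Fin (n + 1) → ℝ) (i : Fin (n + 1)) : qext p i.val = p i := by
  unfold qext
  congr 1
  ext
  simp
  omega

lemma qext_mono {n : ℕ} {p : Fin (n + 1) → ℝ} (hp : StrictMono p) : Monotone (qext p) := by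
  intro a b hab
  exact hp.monotone (by simp [Fin.le_def]; omega)

lemma tele {n : ℕ} (p : Fin (n + 1) → ℝ) {a b : ℕ} (hab : a ≤ b) :
    ∑ i ∈ Finset.Ico a b, (qext p (i + 1) - qext p i) = qext p b - qext p a := by
  rw [Finset.sum_Ico_eq_sub _ hab, Finset.sum_range_sub, Finset.sum_range_sub]
  ring

lemma edge_weight {n : ℕ} (p : Fin (n + 1) → ℝ) (hp : StrictMono p) {a b : Fin (n + 1)}
    (hab : a < b) :
    Sym2.lift ⟨fun u s => |p u - p s|, fun u s => abs_sub_comm _ _⟩ s(a, b)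
      = ∑ i ∈ Finset.Ico a.val b.val, (qext p (i + 1) - qext p i) := by
  rw [Sym2.lift_mk, tele p (le_of_lt hab), qext_fin, qext_fin]
  simp only
  rw [abs_of_nonpos (by linarith [hp hab])]
  ring

lemma gap_sum {n : ℕ} (p : Fin (n + 1) → ℝ) :
    ∑ i : Fin n, (qext p (i.val + 1) - qext p i.val) = p (Fin.last n) - p 0 := by
  rw [Fin.sum_univ_eq_sum_range (fun j => qext p (j + 1) - qext p j), Finset.sum_range_sub]
  have h1 : qext p n = p (Fin.last n) := by
    have := qext_fin p (Fin.last n); simpa using this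
  have h2 : qext p 0 = p 0 := by
    have := qext_fin p 0; simpa using this
  rw [h1, h2]

lemma lower_bound {n : ℕ} (p : Fin (n + 1) → ℝ) (hp : StrictMono p)
    (G : SimpleGraph (Fin (n + 1))) (hG : G.Connected) :
    p (Fin.last n) - p 0 ≤ graphWeight p G := by
  classical
  set E := (Set.toFinite G.edgeSet).toFinset with hE
  obtain ⟨w⟩ := hG.preconnected 0 (Fin.last n)
  have hcross : ∀ i : Fin n, ∃ a b : Fin (n + 1),
      s(a, b) ∈ E ∧ a.val ≤ i.val ∧ i.val < b.val := by
    intro i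
    obtain ⟨d, _, hd1, hd2⟩ := w.exists_boundary_dart {v : Fin (n + 1) | v.val ≤ i.val}
      (by simp) (by simp [Fin.last])
    refine ⟨d.toProd.1, d.toProd.2, ?_, hd1, by simpa using hd2⟩
    simp only [hE, Set.Finite.mem_toFinset, SimpleGraph.mem_edgeSet]
    exact d.adj
  choose a b hab ha hb using hcross
  have key : ∑ i : Fin n, (qext p (i.val + 1) - qext p i.val) ≤ graphWeight p G := by
    have hmaps : ∀ i ∈ (Finset.univ : Finset (Fin n)), s(a i, b i) ∈ E := fun i _ => hab i
    rw [← Finset.sum_fiberwise_of_maps_to hmaps]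
    unfold graphWeight
    rw [← hE]
    apply Finset.sum_le_sum
    intro e he
    rw [hE, Set.Finite.mem_toFinset] at he
    induction e using Sym2.ind with
    | _ x y =>
      rw [SimpleGraph.mem_edgeSet] at he
      obtain ⟨c, d, hcd, hecd⟩ : ∃ c d : Fin (n + 1), c < d ∧ s(x, y) = s(c, d) := by
        rcases lt_trichotomy x y with h | rfl | h
        · exact ⟨x, y, h, rfl⟩
        · exact (G.loopless.irrefl _ he).elim
        · exact ⟨y, x, h, Sym2.eq_swap⟩
      rw [hecd, edge_weight p hp hcd]
      calc ∑ i ∈ Finset.filter (fun i => s(a i, b i) = s(c, d)) Finset.univ,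
              (qext p (i.val + 1) - qext p i.val)
          = ∑ j ∈ (Finset.filter (fun i => s(a i, b i) = s(c, d)) Finset.univ).image Fin.val,
              (qext p (j + 1) - qext p j) :=
            (Finset.sum_image (f := fun j => qext p (j + 1) - qext p j) (g := Fin.val)
              (fun i _ j _ h => Fin.val_injective h)).symm
        _ ≤ ∑ j ∈ Finset.Ico c.val d.val, (qext p (j + 1) - qext p j) := by
            apply Finset.sum_le_sum_of_subset_of_nonneg
            · intro j hj
              simp only [Finset.mem_image, Finset.mem_filter, Finset.mem_univ, true_and] at hj
              obtain ⟨i, heq, rfl⟩ := hj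
              rw [Sym2.eq_iff] at heq
              rw [Finset.mem_Ico]
              rcases heq with ⟨h1, h2⟩ | ⟨h1, h2⟩
              · exact ⟨h1 ▸ ha i, h2 ▸ hb i⟩
              · exfalso
                have h3 : d.val ≤ i.val := by rw [← h1]; exact ha i
                have h4 : i.val < c.val := by rw [← h2]; exact hb i
                have h5 := Fin.lt_def.mp hcd
                omega
            · intro j _ _
              exact sub_nonneg.2 (qext_mono hp (by omega))
  calc p (Fin.last n) - p 0 = ∑ i : Fin n, (qext p (i.val + 1) - qext p i.val) :=
        (gap_sum p).symm
    _ ≤ graphWeight p G := key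

lemma path_edges (n : ℕ) :
    (Set.toFinite (SimpleGraph.pathGraph (n + 1)).edgeSet).toFinset
      = Finset.image (fun i : Fin n => s(i.castSucc, i.succ)) Finset.univ := by
  ext e
  induction e using Sym2.ind with
  | _ x y =>
    simp only [Set.Finite.mem_toFinset, SimpleGraph.mem_edgeSet, SimpleGraph.pathGraph_adj,
      Finset.mem_image, Finset.mem_univ, true_and, Sym2.eq_iff]
    constructor
    · rintro (h | h)
      · have hy := y.isLt
        refine ⟨⟨x.val, by omega⟩, Or.inl ⟨?_, ?_⟩⟩ <;> apply Fin.ext <;>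
          simp [Fin.succ] <;> omega
      · have hx := x.isLt
        refine ⟨⟨y.val, by omega⟩, Or.inr ⟨?_, ?_⟩⟩ <;> apply Fin.ext <;>
          simp [Fin.succ] <;> omega
    · rintro ⟨i, (⟨rfl, rfl⟩ | ⟨rfl, rfl⟩)⟩
      · left; simp
      · right; simp

lemma path_weight {n : ℕ} (p : Fin (n + 1) → ℝ) (hp : StrictMono p) :
    graphWeight p (SimpleGraph.pathGraph (n + 1)) = p (Fin.last n) - p 0 := by
  have hinj : ∀ i ∈ (Finset.univ : Finset (Fin n)), ∀ j ∈ Finset.univ,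
      s(i.castSucc, i.succ) = s(j.castSucc, j.succ) → i = j := by
    intro i _ j _ h
    rw [Sym2.eq_iff] at h
    rcases h with ⟨h1, _⟩ | ⟨h1, h2⟩
    · exact Fin.castSucc_injective _ h1
    · have e1 : i.val = j.val + 1 := by
        have := congrArg Fin.val h1; simpa using this
      have e2 : i.val + 1 = j.val := by
        have := congrArg Fin.val h2; simpa using this
      omega
  unfold graphWeight
  rw [path_edges, Finset.sum_image hinj]
  rw [← gap_sum p]
  apply Finset.sum_congr rfl
  intro i _
  have h1 : (i.castSucc : Fin (n + 1)).val = i.val := rfl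
  have h2 : (i.succ : Fin (n + 1)).val = i.val + 1 := rfl
  rw [edge_weight p hp (Fin.castSucc_lt_succ (i := i)), h1, h2]
  rw [Finset.sum_Ico_eq_sum_range]
  simp

theorem stmt_0 (n : ℕ) (p : Fin (n + 1) → ℝ) (hp : StrictMono p) :
    graphWeight p (SimpleGraph.pathGraph (n + 1)) = p (Fin.last n) - p 0 ∧
    ∀ G : SimpleGraph (Fin (n + 1)), G.IsTree →
      graphWeight p (SimpleGraph.pathGraph (n + 1)) ≤ graphWeight p G := by
  refine ⟨path_weight p hp, fun G hG => ?_⟩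
  rw [path_weight p hp]
  exact lower_bound p hp G hG.isConnected
end

section
/- Let p : Fin n → ℝ be strictly increasing with weights w(u,s) = |p u - p s| on the complete graph on Fin n. Run Prim's (greedy) algorithm starting from any vertex: at each step, add the minimum-weight edge connecting the current tree to a new vertex. Then at every step, the newly added edge connects two vertices that are consecutive in the p-ordering among the vertices considered, and the final tree is the path v_1 — v_2 — ... — v_n in sorted order of p. -/
/-- `u` and `v` are consecutive in the `p`-ordering: `p u < p v` with no value
strictly in between. -/
def Consec {n : ℕ} (p : Fin n → ℝ) (u v : Fin n) : Prop :=
  p u < p v ∧ ∀ g, ¬ (p u < p g ∧ p g < p v)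

/-!
Since `p` is strictly increasing, the tree built so far is always an interval `[a, b]` of
vertices: the cheapest edge leaving `[a, b]` is either `(a, a - 1)` or `(b, b + 1)`, because any
edge `(u, v)` with `u ∈ [a, b]` and `v < a` spans the gap `[p (a - 1), p a]` and so costs at least
as much, with equality only for `(a, a - 1)` itself (symmetrically on the right). Every added
edge therefore joins `p`-consecutive vertices, and by induction the edges chosen before the tree
becomes `[a, b]` are exactly the pairs `(k, k + 1)` with `a ≤ k < b`.
-/

open Finset

def IsPrimStep {m : ℕ} (p : Fin m → ℝ) (S S' : Finset (Fin m)) (e : Fin m × Fin m) : Prop :=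
  e.1 ∈ S ∧ e.2 ∉ S ∧ S' = insert e.2 S ∧ ∀ u ∈ S, ∀ v ∉ S, |p e.1 - p e.2| ≤ |p u - p v|

lemma consec_iff_val_add_one {m : ℕ} {p : Fin m → ℝ} (hp : StrictMono p) {u v : Fin m} :
    Consec p u v ↔ (u : ℕ) + 1 = v := by
  constructor
  · rintro ⟨huv, hgap⟩
    have huv : (u : ℕ) < v := hp.lt_iff_lt.1 huv
    by_contra hne
    exact hgap ⟨u + 1, by omega⟩
      ⟨hp (Fin.lt_def.2 (by dsimp only; omega)), hp (Fin.lt_def.2 (by dsimp only; omega))⟩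
  · intro huv
    refine ⟨hp (Fin.lt_def.2 (by omega)), fun g ⟨hug, hgv⟩ => ?_⟩
    rw [hp.lt_iff_lt, Fin.lt_def] at hug hgv
    omega

lemma eq_and_eq_of_abs_sub_le_of_le {x x' y' y : ℝ} (hx : x ≤ x') (hxy : x' ≤ y') (hy : y' ≤ y)
    (h : |y - x| ≤ |y' - x'|) : x = x' ∧ y = y' := by
  rw [abs_of_nonneg (by linarith), abs_of_nonneg (by linarith)] at h
  constructor <;> linarith

lemma Fin.mem_Icc_iff_val {m : ℕ} {a b x : Fin m} : x ∈ Icc a b ↔ (a : ℕ) ≤ x ∧ (x : ℕ) ≤ b := by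
  rw [mem_Icc, Fin.le_def, Fin.le_def]

lemma IsPrimStep.of_Icc {m : ℕ} {p : Fin m → ℝ} (hp : StrictMono p) {a b : Fin m}
    {S' : Finset (Fin m)} {e : Fin m × Fin m} (h : IsPrimStep p (Icc a b) S' e) :
    (e.2 : ℕ) + 1 = a ∧ e.1 = a ∨ (b : ℕ) + 1 = e.2 ∧ e.1 = b := by
  obtain ⟨hu, hv, -, hmin⟩ := h
  rw [Fin.mem_Icc_iff_val] at hu hv
  rcases Nat.lt_or_ge e.2 a with hva | hbv
  · let a' : Fin m := ⟨a - 1, by omega⟩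
    have ha' : (a' : ℕ) + 1 = a := by simp only [a']; omega
    have hcost := hmin a (Fin.mem_Icc_iff_val.2 ⟨le_rfl, by omega⟩) a'
      (by rw [Fin.mem_Icc_iff_val]; omega)
    obtain ⟨hva', hua⟩ := eq_and_eq_of_abs_sub_le_of_le
      (hp.monotone (Fin.le_def.2 (by omega))) (hp.monotone (Fin.le_def.2 (by omega)))
      (hp.monotone (Fin.le_def.2 hu.1)) hcost
    exact Or.inl ⟨by rw [hp.injective hva', ha'], hp.injective hua⟩
  · let b' : Fin m := ⟨b + 1, by have := e.2.isLt; omega⟩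
    have hb' : (b : ℕ) + 1 = b' := rfl
    have hcost := hmin b (Fin.mem_Icc_iff_val.2 ⟨by omega, le_rfl⟩) b'
      (by rw [Fin.mem_Icc_iff_val]; omega)
    rw [abs_sub_comm, abs_sub_comm (p b)] at hcost
    obtain ⟨hub, hvb'⟩ := eq_and_eq_of_abs_sub_le_of_le
      (hp.monotone (Fin.le_def.2 hu.2)) (hp.monotone (Fin.le_def.2 (by omega)))
      (hp.monotone (Fin.le_def.2 (by omega))) hcost
    exact Or.inr ⟨by rw [hp.injective hvb', hb'], hp.injective hub⟩

section PrimRun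

variable {n : ℕ} {p : Fin (n + 1) → ℝ} {v0 : Fin (n + 1)}
  {S : ℕ → Finset (Fin (n + 1))} {e : ℕ → Fin (n + 1) × Fin (n + 1)}

lemma prim_invariant (hp : StrictMono p) (hS0 : S 0 = {v0})
    (hstep : ∀ t < n, IsPrimStep p (S t) (S (t + 1)) (e t)) :
    ∀ t ≤ n, ∃ a b : Fin (n + 1), (a : ℕ) + t = b ∧ S t = Icc a b ∧
      ∀ u ∈ S t, ∀ v ∈ S t, (u : ℕ) + 1 = v → ∃ s < t, e s = (u, v) ∨ e s = (v, u) := by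
  intro t
  induction t with
  | zero =>
    refine fun _ => ⟨v0, v0, rfl, by rw [hS0, Icc_self], fun u hu v hv huv => ?_⟩
    rw [hS0, mem_singleton] at hu hv
    subst hu hv
    omega
  | succ t ih =>
    intro ht
    obtain ⟨a, b, hab, hSt, hcov⟩ := ih (by omega)
    have hst := hstep t (by omega)
    rw [hSt] at hst
    have hins : S (t + 1) = insert (e t).2 (Icc a b) := hst.2.2.1
    have hcase := hst.of_Icc hp
    rw [Fin.ext_iff, Fin.ext_iff] at hcase
    obtain ⟨a', b', hab', hS'⟩ : ∃ a' b' : Fin (n + 1), (a' : ℕ) + (t + 1) = b' ∧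
        S (t + 1) = Icc a' b' := by
      rcases hcase with hcase | hcase
      · refine ⟨(e t).2, b, by omega, ?_⟩
        ext x
        simp only [hins, mem_insert, Fin.mem_Icc_iff_val, Fin.ext_iff]
        omega
      · refine ⟨a, (e t).2, by omega, ?_⟩
        ext x
        simp only [hins, mem_insert, Fin.mem_Icc_iff_val, Fin.ext_iff]
        omega
    refine ⟨a', b', hab', hS', fun u hu v hv huv => ?_⟩
    -- the only consecutive pair not already inside `S t` is the one joined by `e t`
    have hpair : (u ∈ S t ∧ v ∈ S t) ∨ e t = (u, v) ∨ e t = (v, u) := by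
      rw [hins, mem_insert] at hu hv
      rw [hSt]
      simp only [Fin.mem_Icc_iff_val, Prod.ext_iff, Fin.ext_iff] at hu hv ⊢
      omega
    rcases hpair with ⟨hu, hv⟩ | hedge
    · obtain ⟨s, hs, hes⟩ := hcov u hu v hv huv
      exact ⟨s, by omega, hes⟩
    · exact ⟨t, by omega, hedge⟩

lemma prim_edge_consec (hp : StrictMono p) (hS0 : S 0 = {v0})
    (hstep : ∀ t < n, IsPrimStep p (S t) (S (t + 1)) (e t)) {t : ℕ} (ht : t < n) :
    Consec p (e t).1 (e t).2 ∨ Consec p (e t).2 (e t).1 := by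
  obtain ⟨a, b, -, hSt, -⟩ := prim_invariant hp hS0 hstep t ht.le
  have hst := hstep t ht
  rw [hSt] at hst
  have hcase := hst.of_Icc hp
  rw [consec_iff_val_add_one hp, consec_iff_val_add_one hp]
  rw [Fin.ext_iff, Fin.ext_iff] at hcase
  omega

lemma prim_final_tree (hp : StrictMono p) (hS0 : S 0 = {v0})
    (hstep : ∀ t < n, IsPrimStep p (S t) (S (t + 1)) (e t)) :
    S n = univ ∧ ∀ u v : Fin (n + 1), (u : ℕ) + 1 = v → ∃ t < n, e t = (u, v) ∨ e t = (v, u) := by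
  obtain ⟨a, b, hab, hSn, hcov⟩ := prim_invariant hp hS0 hstep n le_rfl
  have hSn : S n = univ := by
    rw [hSn, eq_univ_iff_forall]
    intro x
    rw [Fin.mem_Icc_iff_val]
    omega
  exact ⟨hSn, fun u v => hcov u (hSn ▸ mem_univ u) v (hSn ▸ mem_univ v)⟩

end PrimRun

/-- Running Prim's greedy algorithm on the complete graph with
weights `|p u - p s|` (for strictly increasing `p` on `n+1` vertices): every
added edge connects two vertices consecutive in the `p`-ordering among the
vertices considered so far, and the final tree is exactly the sorted path. -/
theorem stmt_18 (n : ℕ) (p : Fin (n + 1) → ℝ) (hp : StrictMono p)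
    (v0 : Fin (n + 1)) (S : ℕ → Finset (Fin (n + 1)))
    (e : ℕ → Fin (n + 1) × Fin (n + 1))
    (hS0 : S 0 = {v0})
    (hstep : ∀ t < n, (e t).1 ∈ S t ∧ (e t).2 ∉ S t ∧
      S (t + 1) = insert (e t).2 (S t) ∧
      ∀ u' ∈ S t, ∀ v', v' ∉ S t → |p (e t).1 - p (e t).2| ≤ |p u' - p v'|) :
    (∀ t < n, ∀ g ∈ S (t + 1),
      ¬ (p (e t).1 < p g ∧ p g < p (e t).2) ∧
      ¬ (p (e t).2 < p g ∧ p g < p (e t).1)) ∧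
    S n = Finset.univ ∧
    (∀ u v : Fin (n + 1),
      (∃ t < n, e t = (u, v) ∨ e t = (v, u)) ↔ (Consec p u v ∨ Consec p v u)) := by
  have hconsec := fun t (ht : t < n) => prim_edge_consec hp hS0 hstep ht
  obtain ⟨hSn, hcover⟩ := prim_final_tree hp hS0 hstep
  refine ⟨fun t ht g _ => ?_, hSn, fun u v => ⟨?_, ?_⟩⟩
  · rcases hconsec t ht with h | h
    · exact ⟨h.2 g, fun hg => (h.1.trans (hg.1.trans hg.2)).false⟩
    · exact ⟨fun hg => (h.1.trans (hg.1.trans hg.2)).false, h.2 g⟩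
  · rintro ⟨t, ht, he | he⟩ <;> simpa only [he, or_comm] using hconsec t ht
  · rw [consec_iff_val_add_one hp, consec_iff_val_add_one hp]
    rintro (huv | hvu)
    · exact hcover u v huv
    · obtain ⟨t, ht, he⟩ := hcover v u hvu
      exact ⟨t, ht, he.symm⟩
end
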